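/- The continuous ranked probability score in one dimension (energy score with l = 1, β = 1) is nonnegative in divergence: for real-valued random variables with finite first moments, D(Q,P) = E_{Y∼P}[2E|X − Y| − E|X − X'|] − E_{Y∼P}[2E|Y' − Y| − E|Y' − Y''|] = 2∫_ℝ (F_Q(z) − F_P(z))² dz ≥ 0, where F_Q, F_P are the CDFs of Q and P, X, X' ∼ Q i.i.d., Y, Y', Y'' ∼ P i.i.d., and D(Q,P) = 0 iff F_Q = F_P. -/

import Mathlib

open MeasureTheory Set Filter Topology ENNReal

namespace Stmt12Aux

/-- The symmetric-difference set `{(x,y) | exactly one of x,y is ≤ z}`. -/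
def S (z : ℝ) : Set (ℝ × ℝ) := (Iic z ×ˢ (Iic z)ᶜ) ∪ ((Iic z)ᶜ ×ˢ Iic z)

lemma mem_S {z : ℝ} {p : ℝ × ℝ} : p ∈ S z ↔ z ∈ Ico (min p.1 p.2) (max p.1 p.2) := by
  obtain ⟨x, y⟩ := p
  simp only [S, mem_union, mem_prod, mem_compl_iff, mem_Iic, mem_Ico, min_le_iff, lt_max_iff,
    not_le]
  constructor
  · rintro (⟨h1, h2⟩ | ⟨h1, h2⟩)
    · exact ⟨Or.inl h1, Or.inr h2⟩
    · exact ⟨Or.inr h2, Or.inl h1⟩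
  · rintro ⟨h1 | h1, h2 | h2⟩
    · exact absurd h1 (not_le.mpr h2)
    · exact Or.inl ⟨h1, h2⟩
    · exact Or.inr ⟨h2, h1⟩
    · exact absurd h1 (not_le.mpr h2)

lemma measurableSet_S (z : ℝ) : MeasurableSet (S z) :=
  (measurableSet_Iic.prod measurableSet_Iic.compl).union
    (measurableSet_Iic.compl.prod measurableSet_Iic)

lemma lintegral_S (p : ℝ × ℝ) :
    ∫⁻ z, (S z).indicator (1 : ℝ × ℝ → ℝ≥0∞) p = ENNReal.ofReal |p.1 - p.2| := by
  have h : (fun z => (S z).indicator (1 : ℝ × ℝ → ℝ≥0∞) p)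
      = (Ico (min p.1 p.2) (max p.1 p.2)).indicator (1 : ℝ → ℝ≥0∞) := by
    funext z
    by_cases hz : p ∈ S z
    · rw [indicator_of_mem hz, indicator_of_mem (mem_S.mp hz)]; rfl
    · rw [indicator_of_notMem hz, indicator_of_notMem (fun hz' => hz (mem_S.mpr hz'))]
  rw [h, lintegral_indicator_one measurableSet_Ico, Real.volume_Ico, max_sub_min_eq_abs,
    abs_sub_comm]

lemma meas_joint : Measurable (fun q : (ℝ × ℝ) × ℝ => (S q.2).indicator
    (1 : ℝ × ℝ → ℝ≥0∞) q.1) := by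
  have hm1 : MeasurableSet {q : (ℝ × ℝ) × ℝ | q.1.1 ≤ q.2} :=
    measurableSet_le (measurable_fst.fst) measurable_snd
  have hm2 : MeasurableSet {q : (ℝ × ℝ) × ℝ | q.1.2 ≤ q.2} :=
    measurableSet_le (measurable_fst.snd) measurable_snd
  have hT : MeasurableSet {q : (ℝ × ℝ) × ℝ | q.1 ∈ S q.2} := by
    have hset : {q : (ℝ × ℝ) × ℝ | q.1 ∈ S q.2}
        = ({q : (ℝ × ℝ) × ℝ | q.1.1 ≤ q.2} ∩ {q : (ℝ × ℝ) × ℝ | q.1.2 ≤ q.2}ᶜ)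
          ∪ ({q : (ℝ × ℝ) × ℝ | q.1.1 ≤ q.2}ᶜ ∩ {q : (ℝ × ℝ) × ℝ | q.1.2 ≤ q.2}) := by
      ext q
      simp only [S, mem_union, mem_prod, mem_compl_iff, mem_Iic, mem_setOf_eq, mem_inter_iff]
    rw [hset]
    exact (hm1.inter hm2.compl).union (hm1.compl.inter hm2)
  have hfun : (fun q : (ℝ × ℝ) × ℝ => (S q.2).indicator (1 : ℝ × ℝ → ℝ≥0∞) q.1)
      = {q : (ℝ × ℝ) × ℝ | q.1 ∈ S q.2}.indicator (1 : (ℝ × ℝ) × ℝ → ℝ≥0∞) := by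
    funext q
    by_cases h : q.1 ∈ S q.2 <;> simp [indicator_apply, h]
  rw [hfun]
  exact measurable_const.indicator hT

/-- The real-valued CvM integrand. -/
noncomputable def gg (μ ν : Measure ℝ) (z : ℝ) : ℝ :=
  (μ (Iic z)).toReal * (1 - (ν (Iic z)).toReal) + (1 - (μ (Iic z)).toReal) * (ν (Iic z)).toReal

/-- The ENNReal-valued CvM integrand. -/
noncomputable def Ge (μ ν : Measure ℝ) (z : ℝ) : ℝ≥0∞ :=
  μ (Iic z) * (1 - ν (Iic z)) + (1 - μ (Iic z)) * ν (Iic z)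

lemma meas_Iic (μ : Measure ℝ) : Measurable fun z => μ (Iic z) :=
  Monotone.measurable (fun u v huv => measure_mono (Iic_subset_Iic.mpr huv))

lemma meas_Ge (μ ν : Measure ℝ) : Measurable (Ge μ ν) :=
  (((meas_Iic μ).mul (measurable_const.sub (meas_Iic ν)))).add
    ((measurable_const.sub (meas_Iic μ)).mul (meas_Iic ν))

lemma Ge_toReal (μ ν : Measure ℝ) [IsProbabilityMeasure μ] [IsProbabilityMeasure ν] (z : ℝ) :
    (Ge μ ν z).toReal = gg μ ν z := by
  have hμ : μ (Iic z) ≠ ⊤ := (measure_lt_top μ _).ne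
  have hν : ν (Iic z) ≠ ⊤ := (measure_lt_top ν _).ne
  have hμ1 : μ (Iic z) ≤ 1 := prob_le_one
  have hν1 : ν (Iic z) ≤ 1 := prob_le_one
  rw [Ge, gg, ENNReal.toReal_add, ENNReal.toReal_mul, ENNReal.toReal_mul,
    ENNReal.toReal_sub_of_le hν1 one_ne_top, ENNReal.toReal_sub_of_le hμ1 one_ne_top,
    ENNReal.toReal_one]
  · exact ENNReal.mul_ne_top hμ (ne_top_of_le_ne_top one_ne_top tsub_le_self)
  · exact ENNReal.mul_ne_top (ne_top_of_le_ne_top one_ne_top tsub_le_self) hν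

lemma Ge_lt_top (μ ν : Measure ℝ) [IsProbabilityMeasure μ] [IsProbabilityMeasure ν] (z : ℝ) :
    Ge μ ν z < ⊤ := by
  have hμ : μ (Iic z) ≠ ⊤ := (measure_lt_top μ _).ne
  have hν : ν (Iic z) ≠ ⊤ := (measure_lt_top ν _).ne
  exact ENNReal.add_lt_top.mpr
    ⟨ENNReal.mul_lt_top hμ.lt_top (ne_top_of_le_ne_top one_ne_top tsub_le_self).lt_top,
      ENNReal.mul_lt_top (ne_top_of_le_ne_top one_ne_top tsub_le_self).lt_top hν.lt_top⟩

lemma lint_eq (μ ν : Measure ℝ) [IsProbabilityMeasure μ] [IsProbabilityMeasure ν] :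
    ∫⁻ p, ENNReal.ofReal |p.1 - p.2| ∂(μ.prod ν) = ∫⁻ z, Ge μ ν z := by
  have h1 : ∀ p : ℝ × ℝ, ENNReal.ofReal |p.1 - p.2|
      = ∫⁻ z, (S z).indicator (1 : ℝ × ℝ → ℝ≥0∞) p := fun p => (lintegral_S p).symm
  calc ∫⁻ p, ENNReal.ofReal |p.1 - p.2| ∂(μ.prod ν)
      = ∫⁻ p, (∫⁻ z, (S z).indicator (1 : ℝ × ℝ → ℝ≥0∞) p) ∂(μ.prod ν) := by
        exact lintegral_congr h1
    _ = ∫⁻ z, ∫⁻ p, (S z).indicator (1 : ℝ × ℝ → ℝ≥0∞) p ∂(μ.prod ν) := by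
        exact lintegral_lintegral_swap (by exact meas_joint.aemeasurable)
    _ = ∫⁻ z, Ge μ ν z := by
        refine lintegral_congr fun z => ?_
        rw [lintegral_indicator_one (measurableSet_S z)]
        have hdisj : Disjoint (Iic z ×ˢ (Iic z)ᶜ) ((Iic z)ᶜ ×ˢ Iic z) :=
          Disjoint.set_prod_left disjoint_compl_right _ _
        rw [S, measure_union hdisj (measurableSet_Iic.compl.prod measurableSet_Iic),
          Measure.prod_prod, Measure.prod_prod,
          prob_compl_eq_one_sub measurableSet_Iic, prob_compl_eq_one_sub measurableSet_Iic,
          Ge]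

lemma int_prod (μ ν : Measure ℝ) [IsProbabilityMeasure μ] [IsProbabilityMeasure ν]
    (hμ : Integrable (fun x => |x|) μ) (hν : Integrable (fun x => |x|) ν) :
    Integrable (fun p : ℝ × ℝ => |p.1 - p.2|) (μ.prod ν) := by
  have h1 : Integrable (fun p : ℝ × ℝ => |p.1|) (μ.prod ν) := by
    have hmap : Measure.map Prod.fst (μ.prod ν) = μ := by
      rw [Measure.map_fst_prod]; simp
    have hμ' : Integrable (fun x => |x|) (Measure.map Prod.fst (μ.prod ν)) := hmap.symm ▸ hμ
    have := (integrable_map_measure hμ'.aestronglyMeasurable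
      measurable_fst.aemeasurable).mp hμ'
    simpa [Function.comp_def] using this
  have h2 : Integrable (fun p : ℝ × ℝ => |p.2|) (μ.prod ν) := by
    have hmap : Measure.map Prod.snd (μ.prod ν) = ν := by
      rw [Measure.map_snd_prod]; simp
    have hν' : Integrable (fun x => |x|) (Measure.map Prod.snd (μ.prod ν)) := hmap.symm ▸ hν
    have := (integrable_map_measure hν'.aestronglyMeasurable
      measurable_snd.aemeasurable).mp hν'
    simpa [Function.comp_def] using this
  refine (h1.add h2).mono ?_ (ae_of_all _ fun p => ?_)
  · exact (continuous_abs.comp (continuous_fst.sub continuous_snd)).aestronglyMeasurable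
  · have : |p.1 - p.2| ≤ |p.1| + |p.2| := abs_sub _ _
    calc ‖|p.1 - p.2|‖ = |p.1 - p.2| := by rw [Real.norm_eq_abs, abs_abs]
      _ ≤ |p.1| + |p.2| := this
      _ ≤ ‖|p.1| + |p.2|‖ := le_abs_self _

lemma lint_ne_top (μ ν : Measure ℝ) [IsProbabilityMeasure μ] [IsProbabilityMeasure ν]
    (h : Integrable (fun p : ℝ × ℝ => |p.1 - p.2|) (μ.prod ν)) :
    ∫⁻ z, Ge μ ν z ≠ ⊤ := by
  rw [← lint_eq μ ν]
  have := h.hasFiniteIntegral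
  rw [hasFiniteIntegral_iff_ofReal (ae_of_all _ fun p => abs_nonneg _)] at this
  exact this.ne

lemma integrable_gg (μ ν : Measure ℝ) [IsProbabilityMeasure μ] [IsProbabilityMeasure ν]
    (h : Integrable (fun p : ℝ × ℝ => |p.1 - p.2|) (μ.prod ν)) :
    Integrable (gg μ ν) := by
  have := integrable_toReal_of_lintegral_ne_top (meas_Ge μ ν).aemeasurable (lint_ne_top μ ν h)
  exact this.congr (ae_of_all _ fun z => Ge_toReal μ ν z)

lemma integral_abs_prod (μ ν : Measure ℝ) [IsProbabilityMeasure μ] [IsProbabilityMeasure ν]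
    (h : Integrable (fun p : ℝ × ℝ => |p.1 - p.2|) (μ.prod ν)) :
    ∫ p, |p.1 - p.2| ∂(μ.prod ν) = ∫ z, gg μ ν z := by
  rw [integral_eq_lintegral_of_nonneg_ae (ae_of_all _ fun p => abs_nonneg _)
    h.aestronglyMeasurable]
  have h2 : ∫ z, gg μ ν z = (∫⁻ z, Ge μ ν z).toReal := by
    rw [← integral_toReal (meas_Ge μ ν).aemeasurable (ae_of_all _ fun z => Ge_lt_top μ ν z)]
    exact integral_congr_ae (ae_of_all _ fun z => (Ge_toReal μ ν z).symm)
  rw [h2, lint_eq μ ν]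

/-- A.e. equal right-continuous functions on ℝ are equal. -/
lemma eq_of_rc {f g : ℝ → ℝ} (hf : ∀ x, ContinuousWithinAt f (Ici x) x)
    (hg : ∀ x, ContinuousWithinAt g (Ici x) x) (h : f =ᵐ[volume] g) : f = g := by
  funext z
  set E : Set ℝ := {x | f x = g x} with hE
  have hEc : volume Eᶜ = 0 := by
    have := MeasureTheory.ae_iff.mp h
    simpa [hE, compl_setOf] using this
  set l : Filter ℝ := 𝓝[>] z ⊓ 𝓟 E with hl
  have hne : l.NeBot := by
    rw [hl, inf_principal_neBot_iff]
    intro U hU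
    obtain ⟨u, hu, hsub⟩ := mem_nhdsGT_iff_exists_Ioo_subset.mp hU
    have hzu : z < u := hu
    have hpos : 0 < volume (Ioo z u) := by
      rw [Real.volume_Ioo]
      exact ENNReal.ofReal_pos.mpr (sub_pos.mpr hzu)
    have hne2 : (Ioo z u ∩ E).Nonempty := by
      rw [Set.nonempty_iff_ne_empty]
      intro he
      have hsub2 : Ioo z u ⊆ Eᶜ := by
        intro x hx
        by_contra hx2
        simp only [mem_compl_iff, not_not] at hx2
        exact absurd (Set.mem_inter hx hx2) (by rw [he]; exact notMem_empty x)
      exact absurd (measure_mono_null hsub2 hEc) hpos.ne'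
    exact hne2.mono (inter_subset_inter hsub subset_rfl)
  have hle : l ≤ 𝓝[Ici z] z :=
    le_trans inf_le_left (nhdsWithin_mono z Ioi_subset_Ici_self)
  have h1 : Tendsto f l (𝓝 (f z)) := (hf z).mono_left hle
  have h2 : Tendsto g l (𝓝 (g z)) := (hg z).mono_left hle
  have h3 : f =ᶠ[l] g := by
    have : E ∈ l := le_trans inf_le_right (le_refl (𝓟 E)) (mem_principal_self E)
    exact this
  exact tendsto_nhds_unique (h1.congr' h3) h2

end Stmt12Aux

open Stmt12Aux ProbabilityTheory

/-- The one-dimensional CRPS (energy score with `l = 1`, `β = 1`) is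
nonnegative in divergence: for probability measures `Q, P` on `ℝ` with finite first
moments, `D(Q,P) = E_{Y∼P}[2 E|X−Y| − E|X−X'|] − E_{Y∼P}[2 E|Y'−Y| − E|Y'−Y''|]`
equals `2 ∫ (F_Q(z) − F_P(z))² dz ≥ 0`, and `D(Q,P) = 0` iff `F_Q = F_P`. -/
theorem stmt12 (P Q : Measure ℝ) [IsProbabilityMeasure P] [IsProbabilityMeasure Q]
    (hP1 : Integrable (fun x => |x|) P) (hQ1 : Integrable (fun x => |x|) Q) :
    (∫ y, (2 * (∫ x, |x - y| ∂Q) - ∫ x, ∫ x', |x - x'| ∂Q ∂Q) ∂P)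
        - (∫ y, (2 * (∫ y', |y' - y| ∂P) - ∫ y', ∫ y'', |y' - y''| ∂P ∂P) ∂P)
      = 2 * ∫ z : ℝ, ((Q (Set.Iic z)).toReal - (P (Set.Iic z)).toReal) ^ 2
    ∧ 0 ≤ (∫ y, (2 * (∫ x, |x - y| ∂Q) - ∫ x, ∫ x', |x - x'| ∂Q ∂Q) ∂P)
        - (∫ y, (2 * (∫ y', |y' - y| ∂P) - ∫ y', ∫ y'', |y' - y''| ∂P ∂P) ∂P)
    ∧ ((∫ y, (2 * (∫ x, |x - y| ∂Q) - ∫ x, ∫ x', |x - x'| ∂Q ∂Q) ∂P)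
        - (∫ y, (2 * (∫ y', |y' - y| ∂P) - ∫ y', ∫ y'', |y' - y''| ∂P ∂P) ∂P) = 0
        ↔ (fun z : ℝ => (Q (Set.Iic z)).toReal) = fun z : ℝ => (P (Set.Iic z)).toReal) := by
  -- integrability on products
  have hPQ : Integrable (fun p : ℝ × ℝ => |p.1 - p.2|) (P.prod Q) := int_prod P Q hP1 hQ1
  have hQQ : Integrable (fun p : ℝ × ℝ => |p.1 - p.2|) (Q.prod Q) := int_prod Q Q hQ1 hQ1
  have hPP : Integrable (fun p : ℝ × ℝ => |p.1 - p.2|) (P.prod P) := int_prod P P hP1 hP1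
  -- the four double-integral terms
  have habs : ∀ p : ℝ × ℝ, |p.2 - p.1| = |p.1 - p.2| := fun p => abs_sub_comm _ _
  -- A1 = ∫ y ∂P, ∫ x ∂Q, |x - y|
  have hPQ' : Integrable (Function.uncurry fun y x => |x - y|) (P.prod Q) := by
    refine hPQ.congr (ae_of_all _ fun p => ?_)
    simp [Function.uncurry, abs_sub_comm]
  have hA1 : (∫ y, ∫ x, |x - y| ∂Q ∂P) = ∫ z, gg P Q z := by
    rw [show (∫ y, ∫ x, |x - y| ∂Q ∂P) = ∫ p, (Function.uncurry fun y x => |x - y|) p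
        ∂(P.prod Q) from integral_integral hPQ']
    rw [← integral_abs_prod P Q hPQ]
    exact integral_congr_ae (ae_of_all _ fun p => by simp [Function.uncurry, abs_sub_comm])
  -- CQ = ∫ x ∂Q, ∫ x' ∂Q, |x - x'|
  have hQQ' : Integrable (Function.uncurry fun x x' => |x - x'|) (Q.prod Q) := by
    refine hQQ.congr (ae_of_all _ fun p => ?_)
    simp [Function.uncurry]
  have hCQ : (∫ x, ∫ x', |x - x'| ∂Q ∂Q) = ∫ z, gg Q Q z := by
    rw [show (∫ x, ∫ x', |x - x'| ∂Q ∂Q) = ∫ p, (Function.uncurry fun x x' => |x - x'|) p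
        ∂(Q.prod Q) from integral_integral hQQ']
    rw [← integral_abs_prod Q Q hQQ]
    exact integral_congr_ae (ae_of_all _ fun p => by simp [Function.uncurry])
  -- A2 = ∫ y ∂P, ∫ y' ∂P, |y' - y|
  have hPP' : Integrable (Function.uncurry fun y y' => |y' - y|) (P.prod P) := by
    refine hPP.congr (ae_of_all _ fun p => ?_)
    simp [Function.uncurry, abs_sub_comm]
  have hA2 : (∫ y, ∫ y', |y' - y| ∂P ∂P) = ∫ z, gg P P z := by
    rw [show (∫ y, ∫ y', |y' - y| ∂P ∂P) = ∫ p, (Function.uncurry fun y y' => |y' - y|) p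
        ∂(P.prod P) from integral_integral hPP']
    rw [← integral_abs_prod P P hPP]
    exact integral_congr_ae (ae_of_all _ fun p => by simp [Function.uncurry, abs_sub_comm])
  have hPP'' : Integrable (Function.uncurry fun y' y'' => |y' - y''|) (P.prod P) := by
    refine hPP.congr (ae_of_all _ fun p => ?_)
    simp [Function.uncurry]
  have hCP : (∫ y', ∫ y'', |y' - y''| ∂P ∂P) = ∫ z, gg P P z := by
    rw [show (∫ y', ∫ y'', |y' - y''| ∂P ∂P) = ∫ p, (Function.uncurry fun y' y'' => |y' - y''|) p
        ∂(P.prod P) from integral_integral hPP'']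
    rw [← integral_abs_prod P P hPP]
    exact integral_congr_ae (ae_of_all _ fun p => by simp [Function.uncurry])
  -- reduce the outer integrals
  have hinnerQ : Integrable (fun y => ∫ x, |x - y| ∂Q) P := by
    have := hPQ'.integral_prod_left
    simpa [Function.uncurry] using this
  have hinnerP : Integrable (fun y => ∫ y', |y' - y| ∂P) P := by
    have := hPP'.integral_prod_left
    simpa [Function.uncurry] using this
  have hT1 : (∫ y, (2 * (∫ x, |x - y| ∂Q) - ∫ x, ∫ x', |x - x'| ∂Q ∂Q) ∂P)
      = 2 * (∫ z, gg P Q z) - ∫ z, gg Q Q z := by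
    rw [integral_sub (hinnerQ.const_mul 2) (integrable_const _), integral_const,
      integral_const_mul, hA1, hCQ]
    simp
  have hT2 : (∫ y, (2 * (∫ y', |y' - y| ∂P) - ∫ y', ∫ y'', |y' - y''| ∂P ∂P) ∂P)
      = 2 * (∫ z, gg P P z) - ∫ z, gg P P z := by
    rw [integral_sub (hinnerP.const_mul 2) (integrable_const _), integral_const,
      integral_const_mul, hA2, hCP]
    simp
  -- integrability of the gg's and of the square
  have hIPQ : Integrable (gg P Q) := integrable_gg P Q hPQ
  have hIQQ : Integrable (gg Q Q) := integrable_gg Q Q hQQ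
  have hIPP : Integrable (gg P P) := integrable_gg P P hPP
  have hpt : ∀ z : ℝ, ((Q (Set.Iic z)).toReal - (P (Set.Iic z)).toReal) ^ 2
      = gg P Q z - (1 / 2) * gg Q Q z - (1 / 2) * gg P P z := by
    intro z
    simp only [gg]
    ring
  have hIsq : Integrable (fun z : ℝ => ((Q (Set.Iic z)).toReal - (P (Set.Iic z)).toReal) ^ 2) := by
    have e1 : Integrable (fun z : ℝ => gg P Q z - (1 / 2) * gg Q Q z - (1 / 2) * gg P P z) := by
      exact (hIPQ.sub (hIQQ.const_mul (1 / 2))).sub (hIPP.const_mul (1 / 2))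
    exact e1.congr (ae_of_all _ fun z => (hpt z).symm)
  have hint_sq : ∫ z : ℝ, ((Q (Set.Iic z)).toReal - (P (Set.Iic z)).toReal) ^ 2
      = (∫ z, gg P Q z) - (1 / 2) * (∫ z, gg Q Q z) - (1 / 2) * (∫ z, gg P P z) := by
    have e1 : Integrable (fun z : ℝ => gg P Q z - (1 / 2) * gg Q Q z) := by
      exact hIPQ.sub (hIQQ.const_mul (1 / 2))
    rw [integral_congr_ae (ae_of_all _ hpt),
      integral_sub e1 (hIPP.const_mul (1 / 2)),
      integral_sub hIPQ (hIQQ.const_mul (1 / 2)), integral_const_mul, integral_const_mul]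
  -- the main identity
  have hmain : (∫ y, (2 * (∫ x, |x - y| ∂Q) - ∫ x, ∫ x', |x - x'| ∂Q ∂Q) ∂P)
        - (∫ y, (2 * (∫ y', |y' - y| ∂P) - ∫ y', ∫ y'', |y' - y''| ∂P ∂P) ∂P)
      = 2 * ∫ z : ℝ, ((Q (Set.Iic z)).toReal - (P (Set.Iic z)).toReal) ^ 2 := by
    rw [hT1, hT2, hint_sq]
    ring
  have hnn : 0 ≤ 2 * ∫ z : ℝ, ((Q (Set.Iic z)).toReal - (P (Set.Iic z)).toReal) ^ 2 := by
    have := integral_nonneg (μ := volume)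
      (f := fun z : ℝ => ((Q (Set.Iic z)).toReal - (P (Set.Iic z)).toReal) ^ 2)
      (fun z => sq_nonneg _)
    linarith
  refine ⟨hmain, hmain ▸ hnn, ?_⟩
  constructor
  · intro h0
    rw [hmain] at h0
    have h0' : ∫ z : ℝ, ((Q (Set.Iic z)).toReal - (P (Set.Iic z)).toReal) ^ 2 = 0 := by
      linarith
    have hae : (fun z : ℝ => ((Q (Set.Iic z)).toReal - (P (Set.Iic z)).toReal) ^ 2)
        =ᵐ[volume] 0 :=
      (integral_eq_zero_iff_of_nonneg (fun z => sq_nonneg _) hIsq).mp h0'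
    have hae2 : (fun z : ℝ => (Q (Set.Iic z)).toReal) =ᵐ[volume]
        fun z : ℝ => (P (Set.Iic z)).toReal := by
      filter_upwards [hae] with z hz
      have : ((Q (Set.Iic z)).toReal - (P (Set.Iic z)).toReal) ^ 2 = 0 := hz
      have := pow_eq_zero_iff (n := 2) (by norm_num) |>.mp this
      linarith [sub_eq_zero.mp this]
    -- upgrade a.e. equality to everywhere equality using right continuity of cdf's
    have hfQ : (fun z : ℝ => (Q (Set.Iic z)).toReal) = (cdf Q : ℝ → ℝ) := by
      funext z; exact (cdf_eq_real Q z).symm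
    have hfP : (fun z : ℝ => (P (Set.Iic z)).toReal) = (cdf P : ℝ → ℝ) := by
      funext z; exact (cdf_eq_real P z).symm
    rw [hfQ, hfP] at hae2 ⊢
    exact eq_of_rc (fun x => (cdf Q).right_continuous x) (fun x => (cdf P).right_continuous x)
      hae2
  · intro heq
    rw [hmain]
    have : (fun z : ℝ => ((Q (Set.Iic z)).toReal - (P (Set.Iic z)).toReal) ^ 2)
        = fun _ => (0 : ℝ) := by
      funext z
      have : (Q (Set.Iic z)).toReal = (P (Set.Iic z)).toReal := congrFun heq z
      rw [this]; ring
    rw [this]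
    simp
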